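/- Let J ⊂ {1,…,m} and let (x̄,σ̄) ∈ ℝⁿ × ℝᵐ satisfy A(σ̄)x̄ = b(σ̄), and for all j ∈ Jᶜ: σ̄_j ≤ 0, q_j(x̄) ≤ 0 and σ̄_j·q_j(x̄) = 0, and for all j ∈ J: q_j(x̄) = 0. Then (x̄,σ̄) ∈ X_J × (Y_col ∩ (−Γ_J)) and q₀(x̄) = L(x̄,σ̄) = D_L(σ̄). Moreover, if A(σ̄) is negative semidefinite, then σ̄ ∈ Y_col^{J−} and q₀(x̄) = sup_{x ∈ X_J} q₀(x) = L(x̄,σ̄) = inf_{σ ∈ Y_col^{J−}} D_L(σ) = D_L(σ̄); furthermore, if A(σ̄) is negative definite, then x̄ is the unique global maximizer of q₀ on X_J. -/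

import Mathlib

open Matrix Set

noncomputable section

/-- The quadratic function `x ↦ ½⟨x, A x⟩ − ⟨b, x⟩ + c`. -/
def qf {n : ℕ} (A : Matrix (Fin n) (Fin n) ℝ) (b : Fin n → ℝ) (c : ℝ) (x : Fin n → ℝ) : ℝ :=
  (1 / 2 : ℝ) * (x ⬝ᵥ A.mulVec x) - b ⬝ᵥ x + c

/-- `A(σ) = A₀ + Σ σ_k A_k`. -/
def Amat {n m : ℕ} (A0 : Matrix (Fin n) (Fin n) ℝ) (A : Fin m → Matrix (Fin n) (Fin n) ℝ)
    (σ : Fin m → ℝ) : Matrix (Fin n) (Fin n) ℝ :=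
  A0 + ∑ k, σ k • A k

/-- `b(σ) = b₀ + Σ σ_k b_k`. -/
def bvec {n m : ℕ} (b0 : Fin n → ℝ) (b : Fin m → Fin n → ℝ) (σ : Fin m → ℝ) : Fin n → ℝ :=
  b0 + ∑ k, σ k • b k

/-- `q(x) = (q₁(x), …, q_m(x))`. -/
def qvec {n m : ℕ} (A : Fin m → Matrix (Fin n) (Fin n) ℝ) (b : Fin m → Fin n → ℝ)
    (c : Fin m → ℝ) (x : Fin n → ℝ) : Fin m → ℝ :=
  fun i => qf (A i) (b i) (c i) x

/-- Subdifferential of an (extended-real-valued) convex function represented by its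
finite part `V` and its effective domain `dV`; it is empty outside `dV`. -/
def subdiff {m : ℕ} (V : (Fin m → ℝ) → ℝ) (dV : Set (Fin m → ℝ)) (y : Fin m → ℝ) :
    Set (Fin m → ℝ) :=
  {σ | y ∈ dV ∧ ∀ y' ∈ dV, (y' - y) ⬝ᵥ σ ≤ V y' - V y}

/-- `V ∈ Γ(ℝᵐ)`: proper, convex and lower semicontinuous (closed epigraph), where the
extended-real-valued function is represented by its finite part `V` on its domain `dV`. -/
def properLscConvex {m : ℕ} (V : (Fin m → ℝ) → ℝ) (dV : Set (Fin m → ℝ)) : Prop :=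
  dV.Nonempty ∧ ConvexOn ℝ dV V ∧
    IsClosed {p : (Fin m → ℝ) × ℝ | p.1 ∈ dV ∧ V p.1 ≤ p.2}

/-- `(Vs, dVs)` is the Fenchel conjugate of `(V, dV)`:
`dVs` is the set where the supremum is finite and `Vs` its value there. -/
def isConjugate {m : ℕ} (V : (Fin m → ℝ) → ℝ) (dV : Set (Fin m → ℝ))
    (Vs : (Fin m → ℝ) → ℝ) (dVs : Set (Fin m → ℝ)) : Prop :=
  dVs = {σ | BddAbove ((fun y => y ⬝ᵥ σ - V y) '' dV)} ∧
    ∀ σ ∈ dVs, Vs σ = sSup ((fun y => y ⬝ᵥ σ - V y) '' dV)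

/-- The continuous linear functional `v ↦ ⟨g, v⟩`. -/
def dotCLM {k : ℕ} (g : Fin k → ℝ) : (Fin k → ℝ) →L[ℝ] ℝ :=
  LinearMap.toContinuousLinearMap
    { toFun := fun v => g ⬝ᵥ v
      map_add' := fun u v => by simp [dotProduct_add]
      map_smul' := fun t v => by simp [dotProduct_smul, smul_eq_mul] }

/-- The continuous linear map `v ↦ M v`. -/
def matCLM {k l : ℕ} (M : Matrix (Fin l) (Fin k) ℝ) : (Fin k → ℝ) →L[ℝ] (Fin l → ℝ) :=
  LinearMap.toContinuousLinearMap M.mulVecLin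

/-!
Writing the Lagrangian as a single quadratic, `L(·, σ) = qf (A(σ)) (b(σ)) ⟨σ, c⟩`, a point `x̄`
with `A(σ)x̄ = b(σ)` is a critical point of `L(·, σ)`, hence its global maximizer when
`A(σ) ⪯ 0`, and the unique one when `A(σ) ≺ 0`. On the other hand sign-compatibility of `σ`
with `X_J` gives `⟨q(x), σ⟩ ≥ 0`, i.e. `q₀ ≤ L(·, σ)` on `X_J`, with equality at `(x̄, σ̄)` by
complementary slackness. Chaining these gives `q₀(x) ≤ L(x, σ̄) ≤ L(x̄, σ̄) = q₀(x̄)` for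
`x ∈ X_J` and `D_L(σ̄) = q₀(x̄) ≤ L(x̄, σ) ≤ D_L(σ)` for `σ ∈ Y_col^{J−}`.
-/

section QuadraticForm

variable {n : ℕ} {M : Matrix (Fin n) (Fin n) ℝ}

theorem Matrix.IsSymm.dotProduct_mulVec_comm (hM : M.IsSymm) (x y : Fin n → ℝ) :
    x ⬝ᵥ M *ᵥ y = y ⬝ᵥ M *ᵥ x := by
  rw [dotProduct_mulVec, ← mulVec_transpose, hM, dotProduct_comm]

theorem qf_eq_qf_add_of_mulVec_eq (hM : M.IsSymm) {β x₀ : Fin n → ℝ} (hx₀ : M *ᵥ x₀ = β)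
    (γ : ℝ) (x : Fin n → ℝ) :
    qf M β γ x = qf M β γ x₀ + (1 / 2 : ℝ) * ((x - x₀) ⬝ᵥ M *ᵥ (x - x₀)) := by
  have hβx : β ⬝ᵥ x = x₀ ⬝ᵥ M *ᵥ x := by rw [← hx₀, dotProduct_comm, hM.dotProduct_mulVec_comm]
  have hβx₀ : β ⬝ᵥ x₀ = x₀ ⬝ᵥ M *ᵥ x₀ := by
    rw [← hx₀, dotProduct_comm, hM.dotProduct_mulVec_comm]
  simp only [qf, mulVec_sub, sub_dotProduct, dotProduct_sub, hβx, hβx₀,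
    hM.dotProduct_mulVec_comm x x₀]
  ring

theorem qf_le_qf_of_mulVec_eq (hM : M.IsSymm) (hneg : (-M).PosSemidef) {β x₀ : Fin n → ℝ}
    (hx₀ : M *ᵥ x₀ = β) (γ : ℝ) (x : Fin n → ℝ) : qf M β γ x ≤ qf M β γ x₀ := by
  have hquad : 0 ≤ (x - x₀) ⬝ᵥ (-M) *ᵥ (x - x₀) := by
    simpa using hneg.dotProduct_mulVec_nonneg (x - x₀)
  rw [neg_mulVec, dotProduct_neg] at hquad
  rw [qf_eq_qf_add_of_mulVec_eq hM hx₀ γ x]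
  linarith

theorem qf_lt_qf_of_mulVec_eq (hM : M.IsSymm) (hneg : (-M).PosDef) {β x₀ : Fin n → ℝ}
    (hx₀ : M *ᵥ x₀ = β) (γ : ℝ) {x : Fin n → ℝ} (hx : x ≠ x₀) : qf M β γ x < qf M β γ x₀ := by
  have hquad : 0 < (x - x₀) ⬝ᵥ (-M) *ᵥ (x - x₀) := by
    simpa using hneg.dotProduct_mulVec_pos (sub_ne_zero.mpr hx)
  rw [qf_eq_qf_add_of_mulVec_eq hM hx₀ γ x]
  rw [neg_mulVec, dotProduct_neg] at hquad
  linarith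

end QuadraticForm

section Lagrangian

variable {n m : ℕ} (A0 : Matrix (Fin n) (Fin n) ℝ) (A : Fin m → Matrix (Fin n) (Fin n) ℝ)
  (b0 : Fin n → ℝ) (b : Fin m → Fin n → ℝ) (c : Fin m → ℝ)

def lagrangian (x : Fin n → ℝ) (σ : Fin m → ℝ) : ℝ :=
  qf A0 b0 0 x + qvec A b c x ⬝ᵥ σ

theorem lagrangian_eq_qf (x : Fin n → ℝ) (σ : Fin m → ℝ) :
    lagrangian A0 A b0 b c x σ = qf (Amat A0 A σ) (bvec b0 b σ) (σ ⬝ᵥ c) x := by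
  rw [lagrangian, dotProduct_comm, dotProduct, dotProduct]
  simp only [qf, qvec, Amat, bvec, add_mulVec, sum_mulVec, dotProduct_add, add_dotProduct,
    dotProduct_sum, sum_dotProduct, smul_mulVec, dotProduct_smul, smul_dotProduct, smul_eq_mul,
    mul_add, mul_sub, mul_left_comm (σ _) (1 / 2 : ℝ), Finset.sum_add_distrib,
    Finset.sum_sub_distrib, ← Finset.mul_sum]
  ring

variable {A0 A b0 b c} {J : Set (Fin m)} {x : Fin n → ℝ} {σ : Fin m → ℝ}

theorem isSymm_Amat (hA0 : A0.IsSymm) (hA : ∀ i, (A i).IsSymm) (σ : Fin m → ℝ) :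
    (Amat A0 A σ).IsSymm := by
  simp only [Amat, IsSymm, transpose_add, transpose_sum, transpose_smul, hA0.eq, (hA _).eq]

theorem qvec_dotProduct_nonneg (hJ : ∀ j ∈ J, qf (A j) (b j) (c j) x = 0)
    (hJc : ∀ j ∉ J, qf (A j) (b j) (c j) x ≤ 0) (hσ : ∀ j ∉ J, σ j ≤ 0) :
    0 ≤ qvec A b c x ⬝ᵥ σ := by
  refine Finset.sum_nonneg fun j _ => ?_
  by_cases hj : j ∈ J
  · simp [qvec, hJ j hj]
  · exact mul_nonneg_of_nonpos_of_nonpos (hJc j hj) (hσ j hj)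

theorem qvec_dotProduct_eq_zero (hJ : ∀ j ∈ J, qf (A j) (b j) (c j) x = 0)
    (hslack : ∀ j ∉ J, σ j * qf (A j) (b j) (c j) x = 0) : qvec A b c x ⬝ᵥ σ = 0 := by
  refine Finset.sum_eq_zero fun j _ => ?_
  by_cases hj : j ∈ J
  · simp [qvec, hJ j hj]
  · rw [mul_comm]
    exact hslack j hj

theorem qf_le_lagrangian (hJ : ∀ j ∈ J, qf (A j) (b j) (c j) x = 0)
    (hJc : ∀ j ∉ J, qf (A j) (b j) (c j) x ≤ 0) (hσ : ∀ j ∉ J, σ j ≤ 0) :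
    qf A0 b0 0 x ≤ lagrangian A0 A b0 b c x σ :=
  le_add_of_nonneg_right (qvec_dotProduct_nonneg hJ hJc hσ)

theorem lagrangian_le_of_mulVec_eq (hA0 : A0.IsSymm) (hA : ∀ i, (A i).IsSymm)
    (hneg : (-Amat A0 A σ).PosSemidef) {x₀ : Fin n → ℝ}
    (hx₀ : Amat A0 A σ *ᵥ x₀ = bvec b0 b σ) (x : Fin n → ℝ) :
    lagrangian A0 A b0 b c x σ ≤ lagrangian A0 A b0 b c x₀ σ := by
  simpa only [lagrangian_eq_qf] using
    qf_le_qf_of_mulVec_eq (isSymm_Amat hA0 hA σ) hneg hx₀ (σ ⬝ᵥ c) x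

theorem lagrangian_lt_of_mulVec_eq (hA0 : A0.IsSymm) (hA : ∀ i, (A i).IsSymm)
    (hneg : (-Amat A0 A σ).PosDef) {x₀ : Fin n → ℝ}
    (hx₀ : Amat A0 A σ *ᵥ x₀ = bvec b0 b σ) (hx : x ≠ x₀) :
    lagrangian A0 A b0 b c x σ < lagrangian A0 A b0 b c x₀ σ := by
  simpa only [lagrangian_eq_qf] using
    qf_lt_qf_of_mulVec_eq (isSymm_Amat hA0 hA σ) hneg hx₀ (σ ⬝ᵥ c) hx

end Lagrangian

/-- The "max" variant of Statement 7: if `(x̄,σ̄)` satisfies the KKT-type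
conditions with `σ̄_j ≤ 0` on `Jᶜ`, then `(x̄,σ̄) ∈ X_J × (Y_col ∩ (−Γ_J))` and
`q₀(x̄) = L(x̄,σ̄) = D_L(σ̄)`; if `A(σ̄) ⪯ 0`, then `σ̄ ∈ Y_col^{J−}` and
`q₀(x̄) = sup_{X_J} q₀ = L(x̄,σ̄) = inf_{Y_col^{J−}} D_L = D_L(σ̄)`; if `A(σ̄) ≺ 0`, then
`x̄` is the unique global maximizer of `q₀` on `X_J`. -/
theorem statement8 {n m : ℕ}
    (A0 : Matrix (Fin n) (Fin n) ℝ) (A : Fin m → Matrix (Fin n) (Fin n) ℝ)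
    (b0 : Fin n → ℝ) (b : Fin m → Fin n → ℝ) (c : Fin m → ℝ)
    (hA0 : A0.IsSymm) (hA : ∀ i, (A i).IsSymm)
    (J : Set (Fin m))
    (DL : (Fin m → ℝ) → ℝ)
    (hDL : ∀ σ, bvec b0 b σ ∈ Set.range (Amat A0 A σ).mulVec →
      ∀ x, Amat A0 A σ *ᵥ x = bvec b0 b σ →
        DL σ = qf A0 b0 0 x + qvec A b c x ⬝ᵥ σ)
    (xb : Fin n → ℝ) (σb : Fin m → ℝ)
    (hstat : Amat A0 A σb *ᵥ xb = bvec b0 b σb)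
    (hJc : ∀ j ∉ J, σb j ≤ 0 ∧ qf (A j) (b j) (c j) xb ≤ 0 ∧
      σb j * qf (A j) (b j) (c j) xb = 0)
    (hJ : ∀ j ∈ J, qf (A j) (b j) (c j) xb = 0) :
    xb ∈ {x | (∀ j ∈ J, qf (A j) (b j) (c j) x = 0) ∧
        ∀ j ∉ J, qf (A j) (b j) (c j) x ≤ 0} ∧
    σb ∈ {σ | (∀ j ∉ J, σ j ≤ 0) ∧ bvec b0 b σ ∈ Set.range (Amat A0 A σ).mulVec} ∧
    qf A0 b0 0 xb = qf A0 b0 0 xb + qvec A b c xb ⬝ᵥ σb ∧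
    qf A0 b0 0 xb + qvec A b c xb ⬝ᵥ σb = DL σb ∧
    ((-(Amat A0 A σb)).PosSemidef →
      (∀ x, ((∀ j ∈ J, qf (A j) (b j) (c j) x = 0) ∧
          ∀ j ∉ J, qf (A j) (b j) (c j) x ≤ 0) →
        qf A0 b0 0 x ≤ qf A0 b0 0 xb) ∧
      (∀ σ, (∀ j ∉ J, σ j ≤ 0) → bvec b0 b σ ∈ Set.range (Amat A0 A σ).mulVec →
        (-(Amat A0 A σ)).PosSemidef → DL σb ≤ DL σ) ∧
      ((-(Amat A0 A σb)).PosDef →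
        ∀ x, ((∀ j ∈ J, qf (A j) (b j) (c j) x = 0) ∧
            ∀ j ∉ J, qf (A j) (b j) (c j) x ≤ 0) →
          x ≠ xb → qf A0 b0 0 x < qf A0 b0 0 xb)) := by
  have hslack : qvec A b c xb ⬝ᵥ σb = 0 :=
    qvec_dotProduct_eq_zero hJ fun j hj => (hJc j hj).2.2
  have hLxb : lagrangian A0 A b0 b c xb σb = qf A0 b0 0 xb := by
    rw [lagrangian, hslack, add_zero]
  have hDLσb : DL σb = lagrangian A0 A b0 b c xb σb := hDL σb ⟨xb, hstat⟩ xb hstat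
  have hxbX : ∀ j ∉ J, qf (A j) (b j) (c j) xb ≤ 0 := fun j hj => (hJc j hj).2.1
  have hσbΓ : ∀ j ∉ J, σb j ≤ 0 := fun j hj => (hJc j hj).1
  refine ⟨⟨hJ, hxbX⟩, ⟨hσbΓ, xb, hstat⟩, hLxb.symm, hDLσb.symm, fun hpsd => ⟨?_, ?_, ?_⟩⟩
  · rintro x ⟨hxJ, hxJc⟩
    calc qf A0 b0 0 x ≤ lagrangian A0 A b0 b c x σb := qf_le_lagrangian hxJ hxJc hσbΓ
      _ ≤ lagrangian A0 A b0 b c xb σb := lagrangian_le_of_mulVec_eq hA0 hA hpsd hstat x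
      _ = qf A0 b0 0 xb := hLxb
  · rintro σ hσΓ ⟨x, hx⟩ hpsdσ
    calc DL σb = qf A0 b0 0 xb := hDLσb.trans hLxb
      _ ≤ lagrangian A0 A b0 b c xb σ := qf_le_lagrangian hJ hxbX hσΓ
      _ ≤ lagrangian A0 A b0 b c x σ := lagrangian_le_of_mulVec_eq hA0 hA hpsdσ hx xb
      _ = DL σ := (hDL σ ⟨x, hx⟩ x hx).symm
  · rintro hpd x ⟨hxJ, hxJc⟩ hne
    calc qf A0 b0 0 x ≤ lagrangian A0 A b0 b c x σb := qf_le_lagrangian hxJ hxJc hσbΓ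
      _ < lagrangian A0 A b0 b c xb σb := lagrangian_lt_of_mulVec_eq hA0 hA hpd hstat hne
      _ = qf A0 b0 0 xb := hLxb
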